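/- arXiv:2003.08967 — 5 statements merged into one kernel-verified Lean document; each statement's English description precedes it below -/
import Mathlib

section
/- Let U be a random vector taking values in the nonnegative orthant of ℝ^n and Y = 𝒫(U), with probability mass function P_Y. Then for every y ∈ ℤ^n_{≥0} with P_Y(y) > 0 and every i ∈ [1:n], E[U_i | Y = y] = (y_i + 1) · P_Y(y + 1_i) / P_Y(y), where 1_i denotes the i-th standard basis vector. -/
/-!
Conditionally on `U = u`, the event `Y = y` has probability
`p_y(u) = ∏ⱼ e^{-uⱼ} uⱼ^{yⱼ} / yⱼ!`, so the law of `U` restricted to `{Y = y}` has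
density `p_y` with respect to the law of `U`. The Poisson identity
`uᵢ p_y(u) = (yᵢ + 1) p_{y + 1ᵢ}(u)` then integrates to
`∫_{Y = y} Uᵢ dμ = (yᵢ + 1) P(Y = y + 1ᵢ)`.
-/

open MeasureTheory ProbabilityTheory

noncomputable section

/-- The probability mass function of the Poisson distribution with (real) mean `m`,
evaluated at `k` (with the convention `0 ^ 0 = 1`). -/
def poissonP (m : ℝ) (k : ℕ) : ℝ := m ^ k * Real.exp (-m) / (Nat.factorial k)

/-- `Y = 𝒫(U)` : `U` takes values in the nonnegative orthant and, conditionally on `U = u`,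
the coordinates of `Y` are independent with `Y i` Poisson distributed with mean `u i`. -/
def IsPoissonObs {Ω : Type} [MeasurableSpace Ω] (μ : Measure Ω) {n : ℕ}
    (U : Ω → Fin n → ℝ) (Y : Ω → Fin n → ℕ) : Prop :=
  Measurable U ∧ Measurable Y ∧ (∀ ω i, 0 ≤ U ω i) ∧
    ∀ (y : Fin n → ℕ) (B : Set (Fin n → ℝ)), MeasurableSet B →
      (μ {ω | Y ω = y ∧ U ω ∈ B}).toReal
        = ∫ ω in {ω | U ω ∈ B}, ∏ i, poissonP (U ω i) (y i) ∂μ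

/-- Conditional expectation of `f` given the event `A`. -/
def condExpEvent {Ω : Type} [MeasurableSpace Ω] (μ : Measure Ω) (A : Set Ω)
    (f : Ω → ℝ) : ℝ :=
  (∫ ω in A, f ω ∂μ) / (μ A).toReal

open scoped ENNReal

lemma poissonP_eq_poissonMeasure_real {m : ℝ} (hm : 0 ≤ m) (k : ℕ) :
    poissonP m k = (poissonMeasure m.toNNReal).real {k} := by
  rw [poissonMeasure_real_singleton, Real.coe_toNNReal m hm, poissonP]
  ring

lemma poissonP_nonneg {m : ℝ} (hm : 0 ≤ m) (k : ℕ) : 0 ≤ poissonP m k := by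
  unfold poissonP; positivity

lemma poissonP_le_one {m : ℝ} (hm : 0 ≤ m) (k : ℕ) : poissonP m k ≤ 1 := by
  rw [poissonP_eq_poissonMeasure_real hm]
  exact measureReal_le_one

lemma mul_poissonP (m : ℝ) (k : ℕ) :
    m * poissonP m k = ((k : ℝ) + 1) * poissonP m (k + 1) := by
  unfold poissonP
  rw [Nat.factorial_succ]
  push_cast
  field_simp
  ring

lemma measurable_poissonP (k : ℕ) : Measurable fun m => poissonP m k := by
  unfold poissonP
  fun_prop

/-- The conditional probability of `Y = y` given `U = u`. -/
def poissonDensity {n : ℕ} (y : Fin n → ℕ) (u : Fin n → ℝ) : ℝ :=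
  ∏ j, poissonP (u j) (y j)

section poissonDensity

variable {n : ℕ}

lemma measurable_poissonDensity (y : Fin n → ℕ) : Measurable (poissonDensity y) :=
  Finset.measurable_prod _ fun j _ => (measurable_poissonP (y j)).comp (measurable_pi_apply j)

lemma poissonDensity_nonneg {u : Fin n → ℝ} (hu : ∀ j, 0 ≤ u j) (y : Fin n → ℕ) :
    0 ≤ poissonDensity y u :=
  Finset.prod_nonneg fun j _ => poissonP_nonneg (hu j) _

lemma poissonDensity_le_one {u : Fin n → ℝ} (hu : ∀ j, 0 ≤ u j) (y : Fin n → ℕ) :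
    poissonDensity y u ≤ 1 :=
  Finset.prod_le_one (fun j _ => poissonP_nonneg (hu j) _) fun j _ =>
    poissonP_le_one (hu j) _

lemma mul_poissonDensity (u : Fin n → ℝ) (y : Fin n → ℕ) (i : Fin n) :
    u i * poissonDensity y u = ((y i : ℝ) + 1) * poissonDensity (y + Pi.single i 1) u := by
  have h_off : ∀ j ∈ ({i}ᶜ : Finset (Fin n)),
      poissonP (u j) ((y + Pi.single i 1 : Fin n → ℕ) j) = poissonP (u j) (y j) := by
    intro j hj
    rw [Pi.add_apply, Pi.single_eq_of_ne (by simpa using hj), add_zero]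
  unfold poissonDensity
  rw [Fintype.prod_eq_mul_prod_compl i, Fintype.prod_eq_mul_prod_compl i,
    Finset.prod_congr rfl h_off, ← mul_assoc, mul_poissonP, Pi.add_apply, Pi.single_eq_same,
    mul_assoc]

end poissonDensity

namespace IsPoissonObs

variable {Ω : Type} [MeasurableSpace Ω] {μ : Measure Ω} [IsFiniteMeasure μ] {n : ℕ}
  {U : Ω → Fin n → ℝ} {Y : Ω → Fin n → ℕ}

lemma measure_inter_preimage (hPo : IsPoissonObs μ U Y) (y : Fin n → ℕ)
    {B : Set (Fin n → ℝ)} (hB : MeasurableSet B) :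
    μ ({ω | Y ω = y} ∩ U ⁻¹' B)
      = ∫⁻ ω in U ⁻¹' B, ENNReal.ofReal (poissonDensity y (U ω)) ∂μ := by
  obtain ⟨hU, -, hU_nonneg, hlaw⟩ := hPo
  have hint : Integrable (fun ω => poissonDensity y (U ω)) (μ.restrict (U ⁻¹' B)) :=
    .of_bound ((measurable_poissonDensity y).comp hU).aestronglyMeasurable 1 <| ae_of_all _
      fun ω => by
        rw [Real.norm_of_nonneg (poissonDensity_nonneg (hU_nonneg ω) y)]
        exact poissonDensity_le_one (hU_nonneg ω) y
  rw [← ofReal_integral_eq_lintegral_ofReal hint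
      (ae_of_all _ fun ω => poissonDensity_nonneg (hU_nonneg ω) y),
    ← ENNReal.ofReal_toReal (measure_ne_top μ _)]
  exact congrArg ENNReal.ofReal (hlaw y B hB)

lemma map_restrict_eq_withDensity (hPo : IsPoissonObs μ U Y) (y : Fin n → ℕ) :
    (μ.restrict {ω | Y ω = y}).map U
      = (μ.map U).withDensity fun u => ENNReal.ofReal (poissonDensity y u) := by
  ext B hB
  rw [Measure.map_apply hPo.1 hB, Measure.restrict_apply (hPo.1 hB), withDensity_apply _ hB,
    setLIntegral_map hB (measurable_poissonDensity y).ennreal_ofReal hPo.1, Set.inter_comm,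
    hPo.measure_inter_preimage y hB]

lemma setLIntegral_comp (hPo : IsPoissonObs μ U Y) (y : Fin n → ℕ)
    {g : (Fin n → ℝ) → ℝ≥0∞} (hg : Measurable g) :
    ∫⁻ ω in {ω | Y ω = y}, g (U ω) ∂μ
      = ∫⁻ ω, ENNReal.ofReal (poissonDensity y (U ω)) * g (U ω) ∂μ := by
  have hp := (measurable_poissonDensity y).ennreal_ofReal
  rw [← lintegral_map hg hPo.1, hPo.map_restrict_eq_withDensity y,
    lintegral_withDensity_eq_lintegral_mul _ hp hg, lintegral_map (hp.mul hg) hPo.1]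
  rfl

lemma measure_eq_lintegral (hPo : IsPoissonObs μ U Y) (y : Fin n → ℕ) :
    μ {ω | Y ω = y} = ∫⁻ ω, ENNReal.ofReal (poissonDensity y (U ω)) ∂μ := by
  simpa using hPo.setLIntegral_comp y (g := fun _ => 1) measurable_const

lemma setLIntegral_coord (hPo : IsPoissonObs μ U Y) (y : Fin n → ℕ) (i : Fin n) :
    ∫⁻ ω in {ω | Y ω = y}, ENNReal.ofReal (U ω i) ∂μ
      = ENNReal.ofReal ((y i : ℝ) + 1) * μ {ω | Y ω = y + Pi.single i 1} := by
  rw [hPo.setLIntegral_comp y (measurable_pi_apply i).ennreal_ofReal,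
    hPo.measure_eq_lintegral, ← lintegral_const_mul' _ _ ENNReal.ofReal_ne_top]
  refine lintegral_congr fun ω => ?_
  rw [← ENNReal.ofReal_mul (poissonDensity_nonneg (hPo.2.2.1 ω) y),
    ← ENNReal.ofReal_mul (by positivity), mul_comm, mul_poissonDensity]

lemma setIntegral_coord (hPo : IsPoissonObs μ U Y) (y : Fin n → ℕ) (i : Fin n) :
    ∫ ω in {ω | Y ω = y}, U ω i ∂μ
      = ((y i : ℝ) + 1) * (μ {ω | Y ω = y + Pi.single i 1}).toReal := by
  rw [integral_eq_lintegral_of_nonneg_ae (ae_of_all _ fun ω => hPo.2.2.1 ω i)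
      ((measurable_pi_apply i).comp hPo.1).aestronglyMeasurable,
    hPo.setLIntegral_coord, ENNReal.toReal_mul, ENNReal.toReal_ofReal (by positivity)]

end IsPoissonObs

/-- for `Y = 𝒫(U)`, whenever `P_Y(y) > 0`,
`E[U_i | Y = y] = (y_i + 1) P_Y(y + 1_i) / P_Y(y)`. -/
theorem stmt2 {Ω : Type} [MeasurableSpace Ω] (μ : Measure Ω) [IsProbabilityMeasure μ]
    {n : ℕ} (U : Ω → Fin n → ℝ) (Y : Ω → Fin n → ℕ)
    (hPo : IsPoissonObs μ U Y) :
    ∀ y : Fin n → ℕ, 0 < (μ {ω | Y ω = y}).toReal → ∀ i : Fin n,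
      condExpEvent μ {ω | Y ω = y} (fun ω => U ω i)
        = ((y i : ℝ) + 1) * (μ {ω | Y ω = y + Pi.single i 1}).toReal
            / (μ {ω | Y ω = y}).toReal := by
  intro y _ i
  rw [condExpEvent, hPo.setIntegral_coord y i]
end
end

section
/- Let U be a random vector taking values in the nonnegative orthant of ℝ^n and Y = 𝒫(U). Then for every y ∈ ℤ^n_{≥0} such that P_Y(y) > 0 and P_Y(y + 1_i) > 0, and every i, j ∈ [1:n], the conditional covariance satisfies [Var(U | Y = y)]_{ij} = E[U_i | Y = y] · ( E[U_j | Y = y + 1_i] − E[U_j | Y = y] ). -/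
open MeasureTheory ProbabilityTheory

noncomputable section

/-!
Given `U = u`, the likelihood of `y` is `L y u = ∏ i, e^{-u_i} u_i^{y_i} / y_i!`, and
`u_i · L y u = (y_i + 1) · L (y + 1_i) u`. Integrating against the law of `U`, this gives
`E[U_i g(U); Y = y] = (y_i + 1) E[g(U); Y = y + 1_i]` for every nonnegative `g`.
Taking `g = 1` and `g(u) = u_j` yields `E[U_i U_j | Y = y] = E[U_i | Y = y] E[U_j | Y = y + 1_i]`,
which is the claimed covariance formula.
-/

open scoped ENNReal

lemma succ_mul_poissonP_succ (m : ℝ) (k : ℕ) :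
    ((k : ℝ) + 1) * poissonP m (k + 1) = m * poissonP m k := by
  unfold poissonP
  rw [Nat.factorial_succ, pow_succ]
  push_cast
  field_simp

def poissonLikelihood {n : ℕ} (y : Fin n → ℕ) (u : Fin n → ℝ) : ℝ := ∏ i, poissonP (u i) (y i)

namespace poissonLikelihood

variable {n : ℕ} (y : Fin n → ℕ)

lemma measurable : Measurable (poissonLikelihood y) :=
  Finset.measurable_prod _ fun i _ => (measurable_poissonP (y i)).comp (measurable_pi_apply i)

lemma nonneg {u : Fin n → ℝ} (hu : ∀ i, 0 ≤ u i) : 0 ≤ poissonLikelihood y u :=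
  Finset.prod_nonneg fun i _ => poissonP_nonneg (hu i) _

lemma le_one {u : Fin n → ℝ} (hu : ∀ i, 0 ≤ u i) : poissonLikelihood y u ≤ 1 :=
  Finset.prod_le_one (fun i _ => poissonP_nonneg (hu i) _) fun i _ => poissonP_le_one (hu i) _

lemma mul_eq_succ_mul_add_single (i : Fin n) (u : Fin n → ℝ) :
    u i * poissonLikelihood y u
      = ((y i : ℝ) + 1) * poissonLikelihood (y + Pi.single i 1) u := by
  unfold poissonLikelihood
  rw [← Finset.mul_prod_erase _ _ (Finset.mem_univ i),
    ← Finset.mul_prod_erase _ _ (Finset.mem_univ i), ← mul_assoc, ← mul_assoc]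
  have hrest : ∀ j ∈ Finset.univ.erase i,
      poissonP (u j) ((y + Pi.single i 1 : Fin n → ℕ) j) = poissonP (u j) (y j) := fun j hj => by
    rw [Pi.add_apply, Pi.single_eq_of_ne (Finset.ne_of_mem_erase hj), add_zero]
  rw [Finset.prod_congr rfl hrest, Pi.add_apply, Pi.single_eq_same, succ_mul_poissonP_succ]

end poissonLikelihood

namespace IsPoissonObs

variable {Ω : Type} [MeasurableSpace Ω] {μ : Measure Ω} [IsFiniteMeasure μ] {n : ℕ}
  {U : Ω → Fin n → ℝ} {Y : Ω → Fin n → ℕ}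

lemma map_restrict_eq_map_withDensity (hPo : IsPoissonObs μ U Y) (y : Fin n → ℕ) :
    (μ.restrict {ω | Y ω = y}).map U
      = (μ.withDensity fun ω => ENNReal.ofReal (poissonLikelihood y (U ω))).map U := by
  obtain ⟨hU, -, hpos, hlaw⟩ := hPo
  ext B hB
  have hint : Integrable (fun ω => poissonLikelihood y (U ω)) (μ.restrict (U ⁻¹' B)) := by
    refine .of_bound ((poissonLikelihood.measurable y).comp hU).aestronglyMeasurable 1 ?_
    filter_upwards with ω
    rw [Real.norm_of_nonneg (poissonLikelihood.nonneg y (hpos ω))]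
    exact poissonLikelihood.le_one y (hpos ω)
  have hevent : U ⁻¹' B ∩ {ω | Y ω = y} = {ω | Y ω = y ∧ U ω ∈ B} := by
    ext ω; exact and_comm
  rw [Measure.map_apply hU hB, Measure.map_apply hU hB, Measure.restrict_apply (hU hB),
    withDensity_apply _ (hU hB), hevent, ← ENNReal.ofReal_toReal (measure_ne_top μ _),
    hlaw y B hB]
  exact ofReal_integral_eq_lintegral_ofReal hint
    (.of_forall fun ω => poissonLikelihood.nonneg y (hpos ω))

lemma lintegral_restrict_eq (hPo : IsPoissonObs μ U Y) (y : Fin n → ℕ)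
    {f : (Fin n → ℝ) → ℝ≥0∞} (hf : Measurable f) :
    ∫⁻ ω in {ω | Y ω = y}, f (U ω) ∂μ
      = ∫⁻ ω, ENNReal.ofReal (poissonLikelihood y (U ω)) * f (U ω) ∂μ := by
  have hU := hPo.1
  rw [← lintegral_map hf hU, hPo.map_restrict_eq_map_withDensity y, lintegral_map hf hU]
  exact lintegral_withDensity_eq_lintegral_mul _
    ((poissonLikelihood.measurable y).comp hU).ennreal_ofReal (hf.comp hU)

lemma lintegral_mul_eq_lintegral_add_single (hPo : IsPoissonObs μ U Y) (y : Fin n → ℕ)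
    (i : Fin n) {f : (Fin n → ℝ) → ℝ≥0∞} (hf : Measurable f) :
    ∫⁻ ω in {ω | Y ω = y}, ENNReal.ofReal (U ω i) * f (U ω) ∂μ
      = ENNReal.ofReal ((y i : ℝ) + 1) * ∫⁻ ω in {ω | Y ω = y + Pi.single i 1}, f (U ω) ∂μ := by
  rw [hPo.lintegral_restrict_eq y (f := fun u => ENNReal.ofReal (u i) * f u)
      ((measurable_pi_apply i).ennreal_ofReal.mul hf),
    hPo.lintegral_restrict_eq _ hf, ← lintegral_const_mul']
  · refine lintegral_congr fun ω => ?_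
    rw [← mul_assoc, ← ENNReal.ofReal_mul (poissonLikelihood.nonneg y (hPo.2.2.1 ω)),
      mul_comm (poissonLikelihood y _), poissonLikelihood.mul_eq_succ_mul_add_single,
      ENNReal.ofReal_mul (by positivity), mul_assoc]
  · exact ENNReal.ofReal_ne_top

lemma setIntegral_mul_eq_setIntegral_add_single (hPo : IsPoissonObs μ U Y) (y : Fin n → ℕ)
    (i : Fin n) {g : (Fin n → ℝ) → ℝ} (hg : Measurable g) (hg_nonneg : ∀ ω, 0 ≤ g (U ω)) :
    ∫ ω in {ω | Y ω = y}, U ω i * g (U ω) ∂μ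
      = ((y i : ℝ) + 1) * ∫ ω in {ω | Y ω = y + Pi.single i 1}, g (U ω) ∂μ := by
  have hU := hPo.1
  have hpos := hPo.2.2.1
  have hgU : Measurable fun ω => g (U ω) := hg.comp hU
  rw [integral_eq_lintegral_of_nonneg_ae (.of_forall fun ω => mul_nonneg (hpos ω i) (hg_nonneg ω))
      (((measurable_pi_apply i).comp hU).mul hgU).aestronglyMeasurable,
    integral_eq_lintegral_of_nonneg_ae (.of_forall hg_nonneg) hgU.aestronglyMeasurable]
  simp_rw [ENNReal.ofReal_mul (hpos _ i)]
  rw [hPo.lintegral_mul_eq_lintegral_add_single y i hg.ennreal_ofReal, ENNReal.toReal_mul,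
    ENNReal.toReal_ofReal (by positivity)]

lemma condExpEvent_mul_eq_mul_condExpEvent_add_single (hPo : IsPoissonObs μ U Y)
    (y : Fin n → ℕ) (i : Fin n) {g : (Fin n → ℝ) → ℝ} (hg : Measurable g)
    (hg_nonneg : ∀ ω, 0 ≤ g (U ω)) :
    condExpEvent μ {ω | Y ω = y} (fun ω => U ω i * g (U ω))
      = condExpEvent μ {ω | Y ω = y} (fun ω => U ω i)
        * condExpEvent μ {ω | Y ω = y + Pi.single i 1} (fun ω => g (U ω)) := by
  have hmean : ∫ ω in {ω | Y ω = y}, U ω i ∂μ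
      = ((y i : ℝ) + 1) * (μ {ω | Y ω = y + Pi.single i 1}).toReal := by
    simpa [measureReal_def] using
      hPo.setIntegral_mul_eq_setIntegral_add_single y i measurable_const fun _ => zero_le_one
  unfold condExpEvent
  rw [hPo.setIntegral_mul_eq_setIntegral_add_single y i hg hg_nonneg, hmean]
  rcases eq_or_ne (μ {ω | Y ω = y + Pi.single i 1}) 0 with hnull | hpos
  · -- both sides vanish, the right one through `x / 0 = 0`
    simp [Measure.restrict_eq_zero.mpr hnull]
  · have : (μ {ω | Y ω = y + Pi.single i 1}).toReal ≠ 0 :=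
      ENNReal.toReal_ne_zero.mpr ⟨hpos, measure_ne_top μ _⟩
    field_simp

end IsPoissonObs

/-- for `Y = 𝒫(U)`, whenever `P_Y(y) > 0` and `P_Y(y + 1_i) > 0`,
`[Var(U | Y = y)]_{ij} = E[U_i | Y = y] (E[U_j | Y = y + 1_i] - E[U_j | Y = y])`. -/
theorem stmt7 {Ω : Type} [MeasurableSpace Ω] (μ : Measure Ω) [IsProbabilityMeasure μ]
    {n : ℕ} (U : Ω → Fin n → ℝ) (Y : Ω → Fin n → ℕ)
    (hPo : IsPoissonObs μ U Y) :
    ∀ y : Fin n → ℕ, 0 < (μ {ω | Y ω = y}).toReal → ∀ i : Fin n,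
      0 < (μ {ω | Y ω = y + Pi.single i 1}).toReal → ∀ j : Fin n,
        condExpEvent μ {ω | Y ω = y} (fun ω => U ω i * U ω j)
            - condExpEvent μ {ω | Y ω = y} (fun ω => U ω i)
              * condExpEvent μ {ω | Y ω = y} (fun ω => U ω j)
          = condExpEvent μ {ω | Y ω = y} (fun ω => U ω i)
              * (condExpEvent μ {ω | Y ω = y + Pi.single i 1} (fun ω => U ω j)
                  - condExpEvent μ {ω | Y ω = y} (fun ω => U ω j)) := by
  intro y _ i _ j
  rw [hPo.condExpEvent_mul_eq_mul_condExpEvent_add_single y i (measurable_pi_apply j)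
    fun ω => hPo.2.2.1 ω j]
  ring
end
end

section
/- Let A ∈ ℝ^{n×n} satisfy xᵀAx > 0 for every nonzero x ∈ ℝ^n (so that A + diag(s) is invertible for every s in the nonnegative orthant), and let b ∈ ℝ^n have all entries strictly positive. Suppose g : ℝ^n_{≥0} → ℝ is twice continuously differentiable, g(0) = 0, and ∇g(s) = −(A + diag(s))^{−1} b for every s in the nonnegative orthant. Then A is a diagonal matrix with strictly positive diagonal entries A_11, …, A_nn, and g(s) = −Σ_{i=1}^n b_i · log(1 + s_i / A_ii) for all s in the nonnegative orthant. -/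
/-
Write `M s = A + diag s` and `v s = (M s)⁻¹ b`, so that `∇g = -v` on the orthant. Differentiating
`M s * v s = b` gives `∂v/∂sᵢ = -(M s)⁻¹ eᵢ (v s)ᵢ`, hence symmetry of the Hessian of `g` says that
`(M s)⁻¹ diag (v s)` is symmetric, equivalently so is `M s * diag (v s)`:
`A k i * (v s) i = A i k * (v s) k` for `k ≠ i`.
Coercivity of `A` bounds `v` on the orthant. Letting every coordinate of `s` except the `i`-th
tend to `∞` forces `(v s) k → 0` for `k ≠ i`, while row `i` of `M s * v s = b` reads
`(A *ᵥ v s) i = b i`. If `A k i ≠ 0` the relation above forces `(v s) i → 0` as well, so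
`A *ᵥ v s → 0`, contradicting `b i ≠ 0`. Thus `A` is diagonal, `(v s) j = b j / (A j j + s j)`,
and `g` is determined by its gradient on the convex orthant.
-/

open Matrix Set Filter Topology

section Orthant

variable {ι : Type*}

def nonnegOrthant (ι : Type*) : Set (ι → ℝ) := {s | ∀ i, 0 ≤ s i}

lemma nonnegOrthant_eq_pi : nonnegOrthant ι = univ.pi fun _ => Ici 0 := by
  ext s; simp [nonnegOrthant, Pi.le_def]

lemma zero_mem_nonnegOrthant : (0 : ι → ℝ) ∈ nonnegOrthant ι := fun _ => le_rfl

lemma convex_nonnegOrthant : Convex ℝ (nonnegOrthant ι) := by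
  rw [nonnegOrthant_eq_pi]
  exact convex_pi fun _ _ => convex_Ici 0

lemma interior_nonnegOrthant [Finite ι] : interior (nonnegOrthant ι) = univ.pi fun _ => Ioi 0 := by
  rw [nonnegOrthant_eq_pi, interior_pi_set finite_univ]
  simp only [interior_Ici]

lemma interior_nonnegOrthant_nonempty [Finite ι] : (interior (nonnegOrthant ι)).Nonempty :=
  ⟨1, by simp [interior_nonnegOrthant]⟩

lemma uniqueDiffOn_nonnegOrthant [Finite ι] : UniqueDiffOn ℝ (nonnegOrthant ι) :=
  uniqueDiffOn_convex convex_nonnegOrthant interior_nonnegOrthant_nonempty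

lemma closure_interior_nonnegOrthant [Finite ι] :
    closure (interior (nonnegOrthant ι)) = nonnegOrthant ι := by
  rw [convex_nonnegOrthant.closure_interior_eq_closure_of_nonempty_interior
    interior_nonnegOrthant_nonempty, nonnegOrthant_eq_pi]
  exact (isClosed_set_pi fun _ _ => isClosed_Ici).closure_eq

lemma update_const_mem_nonnegOrthant [DecidableEq ι] {T : ℝ} (hT : 0 ≤ T) (i : ι) :
    Function.update (fun _ => T) i 0 ∈ nonnegOrthant ι := by
  intro j
  rcases eq_or_ne j i with rfl | hji <;> simp [*]

end Orthant

theorem hasFDerivWithinAt_gradient_symm {ι : Type*} [Fintype ι] [DecidableEq ι]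
    {g : (ι → ℝ) → ℝ} {S : Set (ι → ℝ)} {F : (ι → ℝ) → ι → ℝ} {F' : (ι → ℝ) →L[ℝ] ι → ℝ}
    {s₀ : ι → ℝ} (hg : ContDiffOn ℝ 2 g S) (hS : UniqueDiffOn ℝ S) (hs₀ : s₀ ∈ S)
    (hs₀cl : s₀ ∈ closure (interior S))
    (hgrad : ∀ s ∈ S, ∀ j, fderivWithin ℝ g S s (Pi.single j 1) = F s j)
    (hF : HasFDerivWithinAt F F' S s₀) (i j : ι) :
    F' (Pi.single i 1) j = F' (Pi.single j 1) i := by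
  set D := fderivWithin ℝ (fderivWithin ℝ g S) S s₀
  have hD : HasFDerivWithinAt (fderivWithin ℝ g S) D S s₀ :=
    ((hg.fderivWithin hS (by norm_num : (1 : WithTop ℕ∞) + 1 ≤ 2)).differentiableOn one_ne_zero
      s₀ hs₀).hasFDerivWithinAt
  have hF'_eq : ∀ p q, F' (Pi.single p 1) q = D (Pi.single p 1) (Pi.single q 1) := by
    intro p q
    have hFq : HasFDerivWithinAt (fun s => F s q) ((ContinuousLinearMap.proj q).comp F') S s₀ :=
      hasFDerivWithinAt_pi'.1 hF q
    have hDq : HasFDerivWithinAt (fun s => F s q)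
        ((ContinuousLinearMap.apply ℝ ℝ (Pi.single q 1)).comp D) S s₀ :=
      ((ContinuousLinearMap.apply ℝ ℝ (Pi.single q 1) : ((ι → ℝ) →L[ℝ] ℝ) →L[ℝ] ℝ).hasFDerivAt
        |>.comp_hasFDerivWithinAt s₀ hD).congr (fun s hs => (hgrad s hs q).symm)
          (hgrad s₀ hs₀ q).symm
    exact congr($((hS s₀ hs₀).eq hFq hDq) (Pi.single p 1))
  rw [hF'_eq, hF'_eq]
  exact (hg s₀ hs₀).isSymmSndFDerivWithinAt (by simp) hS hs₀cl hs₀ _ _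

theorem ContinuousLinearMap.ext_pi_single {ι R M : Type*} [Finite ι] [DecidableEq ι] [Semiring R]
    [TopologicalSpace R] [AddCommMonoid M] [Module R M] [TopologicalSpace M]
    {L L' : (ι → R) →L[R] M} (h : ∀ j, L (Pi.single j 1) = L' (Pi.single j 1)) : L = L' :=
  ContinuousLinearMap.coe_injective (LinearMap.pi_ext' fun j => LinearMap.ext_ring (h j))

theorem hasFDerivAt_sum_mul_log_one_add_div {ι : Type*} [Fintype ι] {a b s₀ : ι → ℝ}
    (ha : ∀ i, a i ≠ 0) (hs₀ : ∀ i, a i + s₀ i ≠ 0) :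
    HasFDerivAt (fun s => ∑ i, b i * Real.log (1 + s i / a i))
      (∑ i, (b i / (a i + s₀ i)) • ContinuousLinearMap.proj (R := ℝ) (φ := fun _ : ι => ℝ) i)
      s₀ := by
  refine HasFDerivAt.fun_sum fun i _ => ?_
  have hlog : HasDerivAt (fun t => b i * Real.log (1 + t / a i)) (b i / (a i + s₀ i)) (s₀ i) := by
    have h1 : 1 + s₀ i / a i ≠ 0 := by
      rw [one_add_div (ha i)]; exact div_ne_zero (hs₀ i) (ha i)
    refine ((((hasDerivAt_id _).div_const (a i)).const_add 1).log h1).const_mul (b i)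
      |>.congr_deriv ?_
    rw [one_add_div (ha i)]
    field_simp [hs₀ i, ha i]
  exact hlog.comp_hasFDerivAt (f := fun s : ι → ℝ => s i) s₀ (hasFDerivAt_apply i s₀)

theorem eqOn_neg_sum_mul_log_of_fderivWithin {ι : Type*} [Fintype ι] [DecidableEq ι]
    {a b : ι → ℝ} {g : (ι → ℝ) → ℝ} (ha : ∀ i, 0 < a i)
    (hg : DifferentiableOn ℝ g (nonnegOrthant ι)) (hg0 : g 0 = 0)
    (hgrad : ∀ s ∈ nonnegOrthant ι, ∀ j,
      fderivWithin ℝ g (nonnegOrthant ι) s (Pi.single j 1) = -(b j / (a j + s j))) :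
    EqOn g (fun s => -∑ i, b i * Real.log (1 + s i / a i)) (nonnegOrthant ι) := by
  have hG : ∀ s ∈ nonnegOrthant ι, HasFDerivAt (fun s => -∑ i, b i * Real.log (1 + s i / a i))
      (-∑ i, (b i / (a i + s i)) • ContinuousLinearMap.proj (R := ℝ) (φ := fun _ : ι => ℝ) i) s :=
    fun s hs => (hasFDerivAt_sum_mul_log_one_add_div (fun i => (ha i).ne')
      fun i => (add_pos_of_pos_of_nonneg (ha i) (hs i)).ne').neg
  refine convex_nonnegOrthant.eqOn_of_fderivWithin_eq hg
    (fun s hs => (hG s hs).differentiableAt.differentiableWithinAt) uniqueDiffOn_nonnegOrthant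
    (fun s hs => ?_) zero_mem_nonnegOrthant (by simp [hg0])
  rw [(hG s hs).hasFDerivWithinAt.fderivWithin (uniqueDiffOn_nonnegOrthant s hs)]
  refine ContinuousLinearMap.ext_pi_single fun j => ?_
  simp [hgrad s hs j, Pi.single_apply]

theorem dotProduct_le_norm_mul_sum_abs {ι : Type*} [Fintype ι] (v b : ι → ℝ) :
    v ⬝ᵥ b ≤ ‖v‖ * ∑ j, |b j| := by
  rw [Finset.mul_sum]
  refine Finset.sum_le_sum fun j _ => ?_
  calc v j * b j ≤ |v j| * |b j| := by rw [← abs_mul]; exact le_abs_self _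
    _ ≤ ‖v‖ * |b j| := by gcongr; exact norm_le_pi_norm v j

namespace Matrix

theorem exists_pos_mul_sq_norm_le_dotProduct_mulVec {ι : Type*} [Fintype ι] {A : Matrix ι ι ℝ}
    (hA : ∀ x, x ≠ 0 → 0 < x ⬝ᵥ A *ᵥ x) : ∃ c > 0, ∀ x, c * ‖x‖ ^ 2 ≤ x ⬝ᵥ A *ᵥ x := by
  rcases isEmpty_or_nonempty ι with hι | hι
  · exact ⟨1, one_pos, fun x => by simp [Subsingleton.elim x 0]⟩
  have hQ : Continuous fun x : ι → ℝ => x ⬝ᵥ A *ᵥ x :=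
    continuous_id.dotProduct (continuous_const.matrix_mulVec continuous_id)
  obtain ⟨x₀, hx₀, hmin⟩ := (isCompact_sphere (0 : ι → ℝ) 1).exists_isMinOn
    (NormedSpace.sphere_nonempty.2 zero_le_one) hQ.continuousOn
  refine ⟨_, hA x₀ (Metric.ne_of_mem_sphere hx₀ one_ne_zero), fun x => ?_⟩
  rcases eq_or_ne x 0 with rfl | hx
  · simp
  have hxpos : 0 < ‖x‖ := norm_pos_iff.2 hx
  have hy : ‖x‖⁻¹ • x ∈ Metric.sphere (0 : ι → ℝ) 1 := by simp [norm_smul, hxpos.ne']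
  calc (x₀ ⬝ᵥ A *ᵥ x₀) * ‖x‖ ^ 2 ≤ ((‖x‖⁻¹ • x) ⬝ᵥ A *ᵥ (‖x‖⁻¹ • x)) * ‖x‖ ^ 2 := by
        gcongr; exact hmin hy
    _ = x ⬝ᵥ A *ᵥ x := by
        simp only [mulVec_smul, smul_dotProduct, dotProduct_smul, smul_eq_mul]
        field_simp

variable {ι : Type*} [Fintype ι] [DecidableEq ι]

theorem diag_pos_of_dotProduct_mulVec_pos {A : Matrix ι ι ℝ}
    (hA : ∀ x, x ≠ 0 → 0 < x ⬝ᵥ A *ᵥ x) (i : ι) : 0 < A i i := by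
  simpa using hA (Pi.single i 1) (by simp)

theorem isUnit_of_dotProduct_mulVec_pos {M : Matrix ι ι ℝ}
    (hM : ∀ x, x ≠ 0 → 0 < x ⬝ᵥ M *ᵥ x) : IsUnit M := by
  rw [isUnit_iff_isUnit_det, isUnit_iff_ne_zero, ne_eq, ← exists_mulVec_eq_zero_iff]
  rintro ⟨x, hx, hMx⟩
  simpa [hMx] using hM x hx

theorem dotProduct_mulVec_le_dotProduct_add_diagonal_mulVec (A : Matrix ι ι ℝ) {s : ι → ℝ}
    (hs : s ∈ nonnegOrthant ι) (x : ι → ℝ) : x ⬝ᵥ A *ᵥ x ≤ x ⬝ᵥ (A + diagonal s) *ᵥ x := by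
  have : 0 ≤ x ⬝ᵥ diagonal s *ᵥ x :=
    Finset.sum_nonneg fun i _ => by
      simpa [mulVec_diagonal, mul_left_comm, ← sq] using mul_nonneg (hs i) (sq_nonneg (x i))
  rw [add_mulVec, dotProduct_add]
  linarith

theorem isUnit_add_diagonal {A : Matrix ι ι ℝ} (hA : ∀ x, x ≠ 0 → 0 < x ⬝ᵥ A *ᵥ x) {s : ι → ℝ}
    (hs : s ∈ nonnegOrthant ι) : IsUnit (A + diagonal s) :=
  isUnit_of_dotProduct_mulVec_pos fun x hx =>
    (hA x hx).trans_le (dotProduct_mulVec_le_dotProduct_add_diagonal_mulVec A hs x)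

theorem mulVec_nonsing_inv_mulVec {R : Type*} [CommRing R] {M : Matrix ι ι R} (hM : IsUnit M)
    (b : ι → R) :
    M *ᵥ (M⁻¹ *ᵥ b) = b := by
  rw [mulVec_mulVec, mul_nonsing_inv _ ((isUnit_iff_isUnit_det _).1 hM), one_mulVec]

theorem mulVec_inv_add_diagonal_mulVec_add {A : Matrix ι ι ℝ} {s : ι → ℝ}
    (h : IsUnit (A + diagonal s)) (b : ι → ℝ) (j : ι) :
    (A *ᵥ ((A + diagonal s)⁻¹ *ᵥ b)) j + s j * ((A + diagonal s)⁻¹ *ᵥ b) j = b j := by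
  have := congrFun (mulVec_nonsing_inv_mulVec h b) j
  rwa [add_mulVec, Pi.add_apply, mulVec_diagonal] at this

theorem exists_norm_inv_add_diagonal_mulVec_le {A : Matrix ι ι ℝ}
    (hA : ∀ x, x ≠ 0 → 0 < x ⬝ᵥ A *ᵥ x) (b : ι → ℝ) :
    ∃ C, ∀ s ∈ nonnegOrthant ι, ‖(A + diagonal s)⁻¹ *ᵥ b‖ ≤ C := by
  obtain ⟨c, hc, hcA⟩ := exists_pos_mul_sq_norm_le_dotProduct_mulVec hA
  refine ⟨(∑ j, |b j|) / c, fun s hs => ?_⟩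
  set v := (A + diagonal s)⁻¹ *ᵥ b
  have hv : (A + diagonal s) *ᵥ v = b :=
    mulVec_nonsing_inv_mulVec (isUnit_add_diagonal hA hs) b
  have key : c * ‖v‖ ^ 2 ≤ ‖v‖ * ∑ j, |b j| :=
    calc c * ‖v‖ ^ 2 ≤ v ⬝ᵥ A *ᵥ v := hcA v
      _ ≤ v ⬝ᵥ (A + diagonal s) *ᵥ v := dotProduct_mulVec_le_dotProduct_add_diagonal_mulVec A hs v
      _ = v ⬝ᵥ b := by rw [hv]
      _ ≤ ‖v‖ * ∑ j, |b j| := dotProduct_le_norm_mul_sum_abs v b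
  have hsum : 0 ≤ ∑ j, |b j| := Finset.sum_nonneg fun j _ => abs_nonneg _
  rw [le_div_iff₀ hc]
  nlinarith [norm_nonneg v]

theorem inv_add_diagonal_mulVec_of_eq_diagonal {A : Matrix ι ι ℝ} {d s : ι → ℝ}
    (hA : A = diagonal d) (hds : ∀ i, d i + s i ≠ 0) (b : ι → ℝ) :
    (A + diagonal s)⁻¹ *ᵥ b = fun j => b j / (d j + s j) := by
  rw [hA, diagonal_add, inv_eq_right_inv (B := diagonal fun i => (d i + s i)⁻¹)
    (by simp [diagonal_mul_diagonal, hds])]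
  ext j
  simp [mulVec_diagonal, div_eq_inv_mul]

theorem IsSymm.mul_of_mul_eq_one {R : Type*} [CommRing R] {M B D : Matrix ι ι R}
    (hMB : M * B = 1) (hD : D.IsSymm) (h : (B * D).IsSymm) : (M * D).IsSymm :=
  calc (M * D)ᵀ = M * B * D * Mᵀ := by rw [hMB, Matrix.one_mul, transpose_mul, hD.eq]
    _ = M * (B * D)ᵀ * Mᵀ := by rw [h.eq, Matrix.mul_assoc M B]
    _ = M * D := by rw [transpose_mul, hD.eq, Matrix.mul_assoc, Matrix.mul_assoc,
          ← transpose_mul, hMB, transpose_one, Matrix.mul_one]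

section

attribute [local instance] Matrix.linftyOpNormedRing Matrix.linftyOpNormedAlgebra

theorem hasFDerivAt_inv_add_diagonal_mulVec (A : Matrix ι ι ℝ) (b : ι → ℝ) {s₀ : ι → ℝ}
    (h : IsUnit (A + diagonal s₀)) :
    HasFDerivAt (fun s => (A + diagonal s)⁻¹ *ᵥ b)
      (-((A + diagonal s₀)⁻¹ * diagonal ((A + diagonal s₀)⁻¹ *ᵥ b)).mulVecLin.toContinuousLinearMap)
      s₀ := by
  obtain ⟨u, hu⟩ := h
  have hdiag : HasFDerivAt (fun s : ι → ℝ => A + diagonal s)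
      (diagonalLinearMap ι ℝ ℝ).toContinuousLinearMap s₀ :=
    ((diagonalLinearMap ι ℝ ℝ).toContinuousLinearMap.hasFDerivAt).const_add A
  have hinv := (hu ▸ hasFDerivAt_ringInverse (𝕜 := ℝ) u).comp s₀ hdiag
  have happ := (((mulVecBilin ℝ ℝ).flip b).toContinuousLinearMap).hasFDerivAt.comp s₀ hinv
  simp only [nonsing_inv_eq_ringInverse, ← hu]
  refine happ.congr_fderiv ?_
  ext d : 1
  change (-((↑u⁻¹ : Matrix ι ι ℝ) * diagonal d * (↑u⁻¹ : Matrix ι ι ℝ))) *ᵥ b =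
    -((Ring.inverse (u : Matrix ι ι ℝ) * diagonal (Ring.inverse (u : Matrix ι ι ℝ) *ᵥ b)) *ᵥ d)
  rw [Ring.inverse_unit, neg_mulVec, ← mulVec_mulVec, ← mulVec_mulVec, ← mulVec_mulVec]
  congr 2
  ext i
  simp [mulVec_diagonal, mul_comm]

theorem tendsto_inv_add_diagonal_update_mulVec_atTop {A : Matrix ι ι ℝ}
    (hA : ∀ x, x ≠ 0 → 0 < x ⬝ᵥ A *ᵥ x) (b : ι → ℝ) {i k : ι} (hki : k ≠ i) :
    Tendsto (fun T : ℝ => ((A + diagonal (Function.update (fun _ => T) i 0))⁻¹ *ᵥ b) k)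
      atTop (𝓝 0) := by
  obtain ⟨C, hC⟩ := exists_norm_inv_add_diagonal_mulVec_le hA b
  refine squeeze_zero_norm' ?_ ((tendsto_const_nhds (x := |b k| + ‖A‖ * C)).div_atTop tendsto_id)
  filter_upwards [eventually_gt_atTop 0] with T hT
  have hs := update_const_mem_nonnegOrthant hT.le i
  set v := (A + diagonal (Function.update (fun _ => T) i 0))⁻¹ *ᵥ b
  have hrow : T * v k = b k - (A *ᵥ v) k := by
    have := mulVec_inv_add_diagonal_mulVec_add (isUnit_add_diagonal hA hs) b k
    simp only [Function.update_of_ne hki] at this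
    linarith
  have hAv : |(A *ᵥ v) k| ≤ ‖A‖ * C :=
    calc |(A *ᵥ v) k| ≤ ‖A *ᵥ v‖ := by rw [← Real.norm_eq_abs]; exact norm_le_pi_norm _ k
      _ ≤ ‖A‖ * ‖v‖ := linfty_opNorm_mulVec A v
      _ ≤ ‖A‖ * C := by gcongr; exact hC _ hs
  rw [Real.norm_eq_abs, id, le_div_iff₀ hT]
  calc |v k| * T = |b k - (A *ᵥ v) k| := by rw [← hrow, abs_mul, abs_of_pos hT, mul_comm]
    _ ≤ |b k| + ‖A‖ * C := (abs_sub _ _).trans (by gcongr)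

end

theorem eq_zero_of_forall_mul_inv_add_diagonal_mulVec_eq {A : Matrix ι ι ℝ}
    (hA : ∀ x, x ≠ 0 → 0 < x ⬝ᵥ A *ᵥ x) {b : ι → ℝ} {i k : ι} (hki : k ≠ i) (hbi : b i ≠ 0)
    (hrel : ∀ s ∈ nonnegOrthant ι,
      A k i * ((A + diagonal s)⁻¹ *ᵥ b) i = A i k * ((A + diagonal s)⁻¹ *ᵥ b) k) :
    A k i = 0 := by
  by_contra hne
  have hv : Tendsto (fun T : ℝ => (A + diagonal (Function.update (fun _ => T) i 0))⁻¹ *ᵥ b)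
      atTop (𝓝 0) := by
    refine tendsto_pi_nhds.2 fun j => ?_
    rcases eq_or_ne j i with rfl | hji
    · have hk := ((tendsto_inv_add_diagonal_update_mulVec_atTop hA b hki).const_mul
        (A j k)).div_const (A k j)
      rw [mul_zero, zero_div] at hk
      refine hk.congr' ?_
      filter_upwards [eventually_ge_atTop 0] with T hT
      rw [← hrel _ (update_const_mem_nonnegOrthant hT j)]
      field_simp
    · exact tendsto_inv_add_diagonal_update_mulVec_atTop hA b hji
  have hAv : Tendsto
      (fun T : ℝ => (A *ᵥ ((A + diagonal (Function.update (fun _ => T) i 0))⁻¹ *ᵥ b)) i)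
      atTop (𝓝 0) :=
    (((continuous_apply i).comp ((continuous_const (y := A)).matrix_mulVec continuous_id)).tendsto'
      0 0 (by simp)).comp hv
  refine hbi (tendsto_nhds_unique (tendsto_const_nhds.congr' ?_) hAv)
  filter_upwards [eventually_ge_atTop 0] with T hT
  have := mulVec_inv_add_diagonal_mulVec_add
    (isUnit_add_diagonal hA (update_const_mem_nonnegOrthant hT i)) b i
  rw [Function.update_self, zero_mul, add_zero] at this
  exact this.symm

theorem isSymm_add_diagonal_mul_diagonal_of_fderivWithin {A : Matrix ι ι ℝ}
    (hA : ∀ x, x ≠ 0 → 0 < x ⬝ᵥ A *ᵥ x) {b : ι → ℝ} {g : (ι → ℝ) → ℝ}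
    (hg : ContDiffOn ℝ 2 g (nonnegOrthant ι))
    (hgrad : ∀ s ∈ nonnegOrthant ι, ∀ j,
      fderivWithin ℝ g (nonnegOrthant ι) s (Pi.single j 1) = -((A + diagonal s)⁻¹ *ᵥ b) j)
    {s : ι → ℝ} (hs : s ∈ nonnegOrthant ι) :
    ((A + diagonal s) * diagonal ((A + diagonal s)⁻¹ *ᵥ b)).IsSymm := by
  have hunit := isUnit_add_diagonal hA hs
  refine IsSymm.mul_of_mul_eq_one (mul_nonsing_inv _ ((isUnit_iff_isUnit_det _).1 hunit))
    (isSymm_diagonal _) (IsSymm.ext fun i j => ?_)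
  have := hasFDerivWithinAt_gradient_symm (F := fun s => -((A + diagonal s)⁻¹ *ᵥ b)) hg
    uniqueDiffOn_nonnegOrthant hs (by rwa [closure_interior_nonnegOrthant]) hgrad
    (hasFDerivAt_inv_add_diagonal_mulVec A b hunit).neg.hasFDerivWithinAt i j
  simpa [mulVec_single_one] using this

theorem eq_diagonal_of_isSymm_add_diagonal_mul_diagonal {A : Matrix ι ι ℝ}
    (hA : ∀ x, x ≠ 0 → 0 < x ⬝ᵥ A *ᵥ x) {b : ι → ℝ} (hb : ∀ i, b i ≠ 0)
    (hsymm : ∀ s ∈ nonnegOrthant ι,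
      ((A + diagonal s) * diagonal ((A + diagonal s)⁻¹ *ᵥ b)).IsSymm) :
    A = diagonal fun i => A i i := by
  ext k i
  rcases eq_or_ne k i with rfl | hki
  · simp
  rw [diagonal_apply_ne _ hki]
  refine eq_zero_of_forall_mul_inv_add_diagonal_mulVec_eq hA hki (hb i) fun s hs => ?_
  simpa [mul_diagonal, diagonal_apply_ne _ hki, diagonal_apply_ne _ hki.symm] using
    (hsymm s hs).apply i k

end Matrix

/-- if `xᵀAx > 0` for all nonzero `x`, `b` has positive entries, `g` is twice
continuously differentiable on the nonnegative orthant with `g(0) = 0` and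
`∇g(s) = -(A + diag(s))⁻¹ b` there, then `A` is diagonal with positive diagonal entries and
`g(s) = -∑ i, b i * log (1 + s i / A i i)` on the orthant. -/
theorem stmt11 {n : ℕ} (A : Matrix (Fin n) (Fin n) ℝ) (b : Fin n → ℝ)
    (hA : ∀ x : Fin n → ℝ, x ≠ 0 → 0 < dotProduct x (A.mulVec x))
    (hb : ∀ i, 0 < b i)
    (g : (Fin n → ℝ) → ℝ)
    (hg : ContDiffOn ℝ 2 g {s : Fin n → ℝ | ∀ i, 0 ≤ s i})
    (hg0 : g 0 = 0)
    (hgrad : ∀ s : Fin n → ℝ, (∀ i, 0 ≤ s i) → ∀ j : Fin n,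
      fderivWithin ℝ g {s : Fin n → ℝ | ∀ i, 0 ≤ s i} s (Pi.single j 1)
        = -(((A + Matrix.diagonal s)⁻¹).mulVec b) j) :
    (A = Matrix.diagonal fun i => A i i)
      ∧ (∀ i, 0 < A i i)
      ∧ (∀ s : Fin n → ℝ, (∀ i, 0 ≤ s i) →
          g s = -∑ i, b i * Real.log (1 + s i / A i i)) := by
  have hdiag : A = diagonal fun i => A i i :=
    eq_diagonal_of_isSymm_add_diagonal_mul_diagonal hA (fun i => (hb i).ne')
      fun s hs => isSymm_add_diagonal_mul_diagonal_of_fderivWithin hA hg hgrad hs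
  have hpos := diag_pos_of_dotProduct_mulVec_pos hA
  refine ⟨hdiag, hpos, fun s hs => eqOn_neg_sum_mul_log_of_fderivWithin hpos
    (hg.differentiableOn two_ne_zero) hg0 (fun t (ht : ∀ i, 0 ≤ t i) j => ?_) hs⟩
  refine (hgrad t ht j).trans ?_
  rw [inv_add_diagonal_mulVec_of_eq_diagonal hdiag
    fun i => (add_pos_of_pos_of_nonneg (hpos i) (ht i)).ne']
end

section
/- Let U be a random vector taking values in the nonnegative orthant of ℝ^n with E[‖U‖] < ∞ and characteristic function φ_U(t) = E[e^{i tᵀU}]. Let α_1, …, α_n > 0 and θ_1, …, θ_n > 0, let φ_G(t) = Π_{k=1}^n (1 − i t_k/α_k)^{−θ_k} be the characteristic function of the product of independent gamma distributions with rates α_k and shapes θ_k, and set A = diag(1/α_1, …, 1/α_n) and c̃ = (θ_1/α_1, …, θ_n/α_n)ᵀ. Then for every t ∈ ℝ^n: |φ_U(t) − φ_G(t)| ≤ ‖t‖ · sup_{t' ∈ ℝ^n} ‖ (i I + A diag(t')) ∇φ_U(t') + c̃ φ_U(t') ‖. -/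
open MeasureTheory ProbabilityTheory

noncomputable section

/-- Euclidean norm of a real vector. -/
def eNormR {n : ℕ} (v : Fin n → ℝ) : ℝ := Real.sqrt (∑ i, v i ^ 2)

/-- Euclidean norm of a complex vector. -/
def eNormC {n : ℕ} (v : Fin n → ℂ) : ℝ := Real.sqrt (∑ i, ‖v i‖ ^ 2)

/-- The characteristic function `φ_V(t) = E[e^{i tᵀ V}]` of a random vector `V`. -/
def charFunVec {Ω : Type} [MeasurableSpace Ω] (μ : Measure Ω) {n : ℕ}
    (V : Ω → Fin n → ℝ) (t : Fin n → ℝ) : ℂ :=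
  ∫ ω, Complex.exp (Complex.I * ((∑ k, t k * V ω k : ℝ) : ℂ)) ∂μ

/-- The gradient `∇φ_V(t) = E[i V e^{i tᵀ V}]` of the characteristic function of `V`
(valid when `E‖V‖ < ∞`). -/
def gradCharFunVec {Ω : Type} [MeasurableSpace Ω] (μ : Measure Ω) {n : ℕ}
    (V : Ω → Fin n → ℝ) (t : Fin n → ℝ) : Fin n → ℂ := fun j =>
  ∫ ω, Complex.I * (V ω j : ℂ) * Complex.exp (Complex.I * ((∑ k, t k * V ω k : ℝ) : ℂ)) ∂μ

/-- The characteristic function `φ_G(t) = ∏ k, (1 - i t_k/α_k)^{-θ_k}` of the product of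
independent gamma distributions with rates `α k` and shapes `θ k`. -/
def prodGammaCharFun {n : ℕ} (α θ : Fin n → ℝ) (t : Fin n → ℝ) : ℂ :=
  ∏ k, (1 - Complex.I * ((t k / α k : ℝ) : ℂ)) ^ (-(θ k : ℂ))

/-!
Set `cₖ = tₖ/αₖ` and follow the segment `s ↦ s t` with
`g(s) = φ_U(s t) q(s)`, `q(s) = ∏ₖ (1 - i cₖ)^{-θₖ} (1 - i s cₖ)^{θₖ}`, so that `g(0) = φ_G(t)`
and `g(1) = φ_U(t)`. The logarithmic derivative of `q` is `∑ₖ -i cₖ θₖ / (1 - i s cₖ)`, and since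
`i (1 - i s cₖ) = i + s tₖ/αₖ` this turns `g'(s)` into
`q(s) ∑ⱼ (-i tⱼ / (1 - i s cⱼ)) Dⱼ(s t)`, where `D` is the Stein vector
`(i I + A diag(t')) ∇φ_U(t') + c̃ φ_U(t')`. On `[0, 1]` we have `|1 - i s cⱼ| ≥ 1` and
`|q(s)| ≤ 1` (as `|1 - i s c| ≤ |1 - i c|`), so Cauchy–Schwarz gives `|g'(s)| ≤ ‖t‖ M` and the
mean value inequality concludes.
-/

open Complex

lemma norm_one_sub_I_mul_ofReal (x : ℝ) : ‖1 - I * (x : ℂ)‖ = √(1 + x ^ 2) := by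
  rw [show 1 - I * (x : ℂ) = ((1 : ℝ) : ℂ) + ((-x : ℝ) : ℂ) * I by push_cast; ring,
    norm_add_mul_I, one_pow, neg_sq]

lemma one_le_norm_one_sub_I_mul_ofReal (x : ℝ) : 1 ≤ ‖1 - I * (x : ℂ)‖ := by
  rw [norm_one_sub_I_mul_ofReal]
  exact Real.one_le_sqrt.mpr (by nlinarith [sq_nonneg x])

lemma one_sub_I_mul_ofReal_ne_zero (x : ℝ) : 1 - I * (x : ℂ) ≠ 0 :=
  norm_pos_iff.mp (one_pos.trans_le (one_le_norm_one_sub_I_mul_ofReal x))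

lemma norm_one_sub_I_mul_ofReal_le {x y : ℝ} (h : |x| ≤ |y|) :
    ‖1 - I * (x : ℂ)‖ ≤ ‖1 - I * (y : ℂ)‖ := by
  rw [norm_one_sub_I_mul_ofReal, norm_one_sub_I_mul_ofReal]
  exact Real.sqrt_le_sqrt (by linarith [sq_le_sq.mpr h])

lemma one_sub_I_mul_ofReal_mem_slitPlane (x : ℝ) : 1 - I * (x : ℂ) ∈ slitPlane :=
  mem_slitPlane_iff.mpr (Or.inl (by simp))

lemma hasDerivAt_one_sub_I_mul_cpow (c θ s : ℝ) :
    HasDerivAt (fun s : ℝ => (1 - I * ((s * c : ℝ) : ℂ)) ^ (θ : ℂ))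
      ((1 - I * ((s * c : ℝ) : ℂ)) ^ (θ : ℂ) * (-(I * c * θ) / (1 - I * ((s * c : ℝ) : ℂ)))) s := by
  have hz : HasDerivAt (fun s : ℝ => 1 - I * ((s * c : ℝ) : ℂ)) (-(I * c)) s := by
    simpa using ((hasDerivAt_mul_const c).ofReal_comp.const_mul I).const_sub 1
  refine ((hasStrictDerivAt_cpow_const
    (one_sub_I_mul_ofReal_mem_slitPlane (s * c))).hasDerivAt.comp s hz).congr_deriv ?_
  rw [cpow_sub _ _ (one_sub_I_mul_ofReal_ne_zero _), cpow_one]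
  ring

lemma norm_cexp_I_mul_ofReal (x : ℝ) : ‖cexp (I * (x : ℂ))‖ = 1 := by
  rw [mul_comm]
  exact norm_exp_ofReal_mul_I x

section

variable {n : ℕ}

def gammaPath (c θ : Fin n → ℝ) (s : ℝ) : ℂ :=
  ∏ k, (1 - I * (c k : ℂ)) ^ (-(θ k : ℂ)) * (1 - I * ((s * c k : ℝ) : ℂ)) ^ (θ k : ℂ)

lemma gammaPath_zero (α θ t : Fin n → ℝ) :
    gammaPath (fun k => t k / α k) θ 0 = prodGammaCharFun α θ t := by
  simp [gammaPath, prodGammaCharFun]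

lemma gammaPath_one (c θ : Fin n → ℝ) : gammaPath c θ 1 = 1 := by
  refine Finset.prod_eq_one fun k _ => ?_
  rw [one_mul, ← cpow_add _ _ (one_sub_I_mul_ofReal_ne_zero _), neg_add_cancel, cpow_zero]

lemma hasDerivAt_gammaPath (c θ : Fin n → ℝ) (s : ℝ) :
    HasDerivAt (gammaPath c θ)
      (gammaPath c θ s * ∑ j, -(I * c j * θ j) / (1 - I * ((s * c j : ℝ) : ℂ))) s := by
  have h := HasDerivAt.fun_finsetProd (u := Finset.univ) fun k _ =>
    (hasDerivAt_one_sub_I_mul_cpow (c k) (θ k) s).const_mul ((1 - I * (c k : ℂ)) ^ (-(θ k : ℂ)))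
  refine h.congr_deriv ?_
  rw [Finset.mul_sum]
  refine Finset.sum_congr rfl fun j _ => ?_
  rw [smul_eq_mul, gammaPath, ← Finset.prod_erase_mul _ _ (Finset.mem_univ j)]
  ring

lemma norm_gammaPath_le_one (c θ : Fin n → ℝ) (hθ : ∀ k, 0 ≤ θ k) {s : ℝ} (hs : |s| ≤ 1) :
    ‖gammaPath c θ s‖ ≤ 1 := by
  rw [gammaPath, norm_prod]
  refine Finset.prod_le_one (fun _ _ => norm_nonneg _) fun k _ => ?_
  have h1 := one_le_norm_one_sub_I_mul_ofReal (c k)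
  have hle : ‖1 - I * ((s * c k : ℝ) : ℂ)‖ ≤ ‖1 - I * (c k : ℂ)‖ :=
    norm_one_sub_I_mul_ofReal_le (by rw [abs_mul]; exact mul_le_of_le_one_left (abs_nonneg _) hs)
  rw [norm_mul, ← ofReal_neg, norm_cpow_real, norm_cpow_real, Real.rpow_neg (by positivity),
    inv_mul_le_one₀ (by positivity)]
  exact Real.rpow_le_rpow (norm_nonneg _) hle (hθ k)

lemma abs_le_eNormR (v : Fin n → ℝ) (j : Fin n) : |v j| ≤ eNormR v := by
  rw [eNormR, ← Real.sqrt_sq_eq_abs]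
  exact Real.sqrt_le_sqrt
    (Finset.single_le_sum (f := fun i => v i ^ 2) (fun i _ => sq_nonneg _) (Finset.mem_univ j))

lemma sum_abs_mul_norm_le_eNormR_mul_eNormC (t : Fin n → ℝ) (v : Fin n → ℂ) :
    ∑ j, |t j| * ‖v j‖ ≤ eNormR t * eNormC v := by
  rw [eNormR, eNormC, ← Real.sqrt_mul (Finset.sum_nonneg fun _ _ => sq_nonneg _)]
  refine Real.le_sqrt_of_sq_le ?_
  simpa only [sq_abs] using Finset.sum_mul_sq_le_sq_mul_sq Finset.univ (|t ·|) (‖v ·‖)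

lemma norm_gammaPath_mul_sum_le (c θ t : Fin n → ℝ) (hθ : ∀ k, 0 ≤ θ k) (v : Fin n → ℂ)
    {s : ℝ} (hs : |s| ≤ 1) :
    ‖gammaPath c θ s * ∑ j, -(I * t j) / (1 - I * ((s * c j : ℝ) : ℂ)) * v j‖
      ≤ eNormR t * eNormC v := by
  have hterm : ∀ j, ‖-(I * t j) / (1 - I * ((s * c j : ℝ) : ℂ)) * v j‖ ≤ |t j| * ‖v j‖ := by
    intro j
    rw [norm_mul, norm_div, norm_neg, norm_mul, norm_I, one_mul, norm_real, Real.norm_eq_abs]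
    gcongr
    exact div_le_self (abs_nonneg _) (one_le_norm_one_sub_I_mul_ofReal _)
  calc _ ≤ 1 * ∑ j, ‖-(I * t j) / (1 - I * ((s * c j : ℝ) : ℂ)) * v j‖ := by
        rw [norm_mul]
        gcongr
        exacts [norm_gammaPath_le_one c θ hθ hs, norm_sum_le _ _]
    _ ≤ ∑ j, |t j| * ‖v j‖ := by
        rw [one_mul]
        exact Finset.sum_le_sum fun j _ => hterm j
    _ ≤ eNormR t * eNormC v := sum_abs_mul_norm_le_eNormR_mul_eNormC t v

section CharFun

variable {Ω : Type} [MeasurableSpace Ω]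

def gammaSteinVec (μ : Measure Ω) (U : Ω → Fin n → ℝ) (α θ t : Fin n → ℝ) : Fin n → ℂ :=
  (Complex.I • (1 : Matrix (Fin n) (Fin n) ℂ)
      + Matrix.diagonal (fun k => (((α k)⁻¹ : ℝ) : ℂ))
        * Matrix.diagonal (fun k => ((t k : ℝ) : ℂ))).mulVec (gradCharFunVec μ U t)
    + fun j => ((θ j / α j : ℝ) : ℂ) * charFunVec μ U t

variable {μ : Measure Ω}

lemma hasDerivAt_integral_cexp_I_mul [IsFiniteMeasure μ] {r : Ω → ℝ} (hr : Integrable r μ)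
    (s : ℝ) :
    HasDerivAt (fun s : ℝ => ∫ ω, cexp (I * ((s * r ω : ℝ) : ℂ)) ∂μ)
      (∫ ω, I * (r ω : ℂ) * cexp (I * ((s * r ω : ℝ) : ℂ)) ∂μ) s := by
  have hmeas : ∀ s : ℝ, AEStronglyMeasurable (fun ω => cexp (I * ((s * r ω : ℝ) : ℂ))) μ :=
    fun s => (by fun_prop : Continuous fun x : ℝ => cexp (I * ((s * x : ℝ) : ℂ)))
      |>.comp_aestronglyMeasurable hr.aestronglyMeasurable
  refine (hasDerivAt_integral_of_dominated_loc_of_deriv_le (bound := fun ω => |r ω|)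
    (F' := fun s ω => I * (r ω : ℂ) * cexp (I * ((s * r ω : ℝ) : ℂ)))
    (Metric.ball_mem_nhds s one_pos)
    (Filter.Eventually.of_forall hmeas) ?_ ?_ ?_ hr.abs ?_).2
  · exact (integrable_const (1 : ℝ)).mono' (hmeas s)
      (Filter.Eventually.of_forall fun ω => (norm_cexp_I_mul_ofReal _).le)
  · exact ((continuous_const.mul continuous_ofReal).comp_aestronglyMeasurable
      hr.aestronglyMeasurable).mul (hmeas s)
  · refine Filter.Eventually.of_forall fun ω x _ => ?_
    simp only [norm_mul, norm_I, norm_real, Real.norm_eq_abs, norm_cexp_I_mul_ofReal, one_mul,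
      mul_one, le_refl]
  · refine Filter.Eventually.of_forall fun ω x _ => ?_
    have h := ((hasDerivAt_mul_const (x := x) (r ω)).ofReal_comp.const_mul I).cexp
    refine h.congr_deriv ?_
    push_cast
    ring

variable {U : Ω → Fin n → ℝ}

lemma integrable_apply_of_integrable_eNormR (hU : Measurable U)
    (hint : Integrable (fun ω => eNormR (U ω)) μ) (j : Fin n) :
    Integrable (fun ω => U ω j) μ :=
  hint.mono' (measurable_pi_apply j |>.comp hU).aestronglyMeasurable
    (Filter.Eventually.of_forall fun ω => abs_le_eNormR (U ω) j)

lemma charFunVec_zero [IsProbabilityMeasure μ] : charFunVec μ U 0 = 1 := by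
  simp [charFunVec]

lemma hasDerivAt_charFunVec_smul [IsFiniteMeasure μ] (hU : Measurable U)
    (hint : Integrable (fun ω => eNormR (U ω)) μ) (t : Fin n → ℝ) (s : ℝ) :
    HasDerivAt (fun s : ℝ => charFunVec μ U (s • t))
      (∑ j, (t j : ℂ) * gradCharFunVec μ U (s • t) j) s := by
  have hUj := integrable_apply_of_integrable_eNormR hU hint
  set r : Ω → ℝ := fun ω => ∑ k, t k * U ω k
  have hline : ∀ (s : ℝ) (ω : Ω), ∑ k, (s • t) k * U ω k = s * r ω := fun s ω => by
    simp only [r, Pi.smul_apply, smul_eq_mul, Finset.mul_sum, mul_assoc]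
  have hr : Integrable r μ := integrable_finsetSum _ fun k _ => (hUj k).const_mul (t k)
  have hder := hasDerivAt_integral_cexp_I_mul hr s
  simp only [charFunVec, gradCharFunVec, hline]
  refine hder.congr_deriv ?_
  have hintegrand : ∀ j, Integrable (fun ω => I * (U ω j : ℂ) * cexp (I * ((s * r ω : ℝ) : ℂ))) μ :=
    fun j => (hUj j).norm.mono' (by fun_prop) (Filter.Eventually.of_forall fun ω => by
      simp only [norm_mul, norm_I, norm_real, norm_cexp_I_mul_ofReal, one_mul, mul_one, le_refl])
  have hexpand : ∀ ω, I * (r ω : ℂ) * cexp (I * ((s * r ω : ℝ) : ℂ))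
      = ∑ j, (t j : ℂ) * (I * (U ω j : ℂ) * cexp (I * ((s * r ω : ℝ) : ℂ))) := fun ω => by
    simp only [r, ofReal_sum, ofReal_mul, Finset.mul_sum, Finset.sum_mul]
    exact Finset.sum_congr rfl fun j _ => by ring
  rw [integral_congr_ae (Filter.Eventually.of_forall hexpand),
    integral_finsetSum _ fun j _ => (hintegrand j).const_mul _]
  simp only [integral_const_mul]

lemma gammaSteinVec_apply (α θ t : Fin n → ℝ) (j : Fin n) :
    gammaSteinVec μ U α θ t j = I * (1 - I * ((t j / α j : ℝ) : ℂ)) * gradCharFunVec μ U t j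
      + ((θ j / α j : ℝ) : ℂ) * charFunVec μ U t := by
  simp only [gammaSteinVec, Pi.add_apply, Matrix.add_mulVec, Matrix.smul_mulVec,
    Matrix.one_mulVec, Matrix.diagonal_mul_diagonal, Matrix.mulVec_diagonal, Pi.smul_apply,
    smul_eq_mul]
  push_cast
  linear_combination (t j / α j * gradCharFunVec μ U t j) * I_mul_I

lemma hasDerivAt_charFunVec_smul_mul_gammaPath [IsFiniteMeasure μ] (hU : Measurable U)
    (hint : Integrable (fun ω => eNormR (U ω)) μ) (α θ t : Fin n → ℝ) (s : ℝ) :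
    HasDerivAt (fun s : ℝ => charFunVec μ U (s • t) * gammaPath (fun k => t k / α k) θ s)
      (gammaPath (fun k => t k / α k) θ s * ∑ j, -(I * t j) / (1 - I * ((s * (t j / α j) : ℝ) : ℂ))
        * gammaSteinVec μ U α θ (s • t) j) s := by
  refine ((hasDerivAt_charFunVec_smul hU hint t s).mul
    (hasDerivAt_gammaPath _ θ s)).congr_deriv ?_
  simp only [gammaSteinVec_apply, Pi.smul_apply, smul_eq_mul, mul_div_assoc, Finset.mul_sum,
    Finset.sum_mul, ← Finset.sum_add_distrib]
  refine Finset.sum_congr rfl fun j _ => ?_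
  have hz := one_sub_I_mul_ofReal_ne_zero (s * (t j / α j))
  generalize 1 - I * ((s * (t j / α j) : ℝ) : ℂ) = z at hz ⊢
  push_cast
  field_simp
  linear_combination
    (t j * gammaPath (fun k => t k / α k) θ s * gradCharFunVec μ U (s • t) j * z) * I_mul_I

end CharFun

end

theorem stmt13_general {Ω : Type} [MeasurableSpace Ω] (μ : Measure Ω) [IsProbabilityMeasure μ]
    {n : ℕ} (U : Ω → Fin n → ℝ) (hU : Measurable U)
    (hint : Integrable (fun ω => eNormR (U ω)) μ)
    (α θ : Fin n → ℝ) (hθ : ∀ i, 0 < θ i) :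
    ∀ t : Fin n → ℝ, ∀ M : ℝ,
      (∀ t' : Fin n → ℝ,
        eNormC
          ((Complex.I • (1 : Matrix (Fin n) (Fin n) ℂ)
              + Matrix.diagonal (fun k => (((α k)⁻¹ : ℝ) : ℂ))
                * Matrix.diagonal (fun k => ((t' k : ℝ) : ℂ))).mulVec
                  (gradCharFunVec μ U t')
            + fun j => ((θ j / α j : ℝ) : ℂ) * charFunVec μ U t') ≤ M) →
      ‖charFunVec μ U t - prodGammaCharFun α θ t‖ ≤ eNormR t * M := by
  intro t M hM
  have hderiv := hasDerivAt_charFunVec_smul_mul_gammaPath hU hint α θ t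
  have hmvt := norm_image_sub_le_of_norm_deriv_le_segment_01' (C := eNormR t * M)
    (fun s _ => (hderiv s).hasDerivWithinAt) fun s hs =>
      (norm_gammaPath_mul_sum_le _ θ t (fun k => (hθ k).le) _
        (abs_le.mpr ⟨by linarith [hs.1], hs.2.le⟩)).trans
      (mul_le_mul_of_nonneg_left (hM (s • t)) (Real.sqrt_nonneg _))
  simpa [charFunVec_zero, gammaPath_one, gammaPath_zero] using hmvt

/-- for a nonnegative random vector `U` with `E‖U‖ < ∞`, with
`A = diag(1/α₁, …, 1/αₙ)` and `c̃ = (θ₁/α₁, …, θₙ/αₙ)ᵀ`, for every `t`,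
`|φ_U(t) - φ_G(t)| ≤ ‖t‖ ⬝ sup_{t'} ‖(i I + A diag(t')) ∇φ_U(t') + c̃ φ_U(t')‖`. -/
theorem stmt13 {Ω : Type} [MeasurableSpace Ω] (μ : Measure Ω) [IsProbabilityMeasure μ]
    {n : ℕ} (U : Ω → Fin n → ℝ) (hU : Measurable U) (hUpos : ∀ ω i, 0 ≤ U ω i)
    (hint : Integrable (fun ω => eNormR (U ω)) μ)
    (α θ : Fin n → ℝ) (hα : ∀ i, 0 < α i) (hθ : ∀ i, 0 < θ i) :
    ∀ t : Fin n → ℝ, ∀ M : ℝ,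
      (∀ t' : Fin n → ℝ,
        eNormC
          ((Complex.I • (1 : Matrix (Fin n) (Fin n) ℂ)
              + Matrix.diagonal (fun k => (((α k)⁻¹ : ℝ) : ℂ))
                * Matrix.diagonal (fun k => ((t' k : ℝ) : ℂ))).mulVec
                  (gradCharFunVec μ U t')
            + fun j => ((θ j / α j : ℝ) : ℂ) * charFunVec μ U t') ≤ M) →
      ‖charFunVec μ U t - prodGammaCharFun α θ t‖ ≤ eNormR t * M :=
  stmt13_general μ U hU hint α θ hθ
end
end

section
/- Let a > 0, λ ≥ 0, let X be a nonnegative real random variable, and let Y be a nonnegative integer random variable such that, conditionally on X = x, Y is Poisson distributed with mean a x + λ. Then for every k ∈ ℤ_{≥0} with P_Y(k) > 0, E[X | Y = k] = (1/a) · (k+1) P_Y(k+1)/P_Y(k) − λ/a. Moreover, if X is exponentially distributed with rate α > 0 (density α e^{−αx} for x ≥ 0), then P_Y(0) = α e^{−λ} / (α + a). -/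
/-!
On `{Y = k}` the law of `X` is the law of `X` with density `x ↦ Pois(a x + λ)(k)`, so
`∫_{Y = k} X = E[X · Pois(a X + λ)(k)]`. The recurrence `m · Pois(m)(k) = (k + 1) · Pois(m)(k + 1)`
with `m = a X + λ` turns this into `((k + 1) P_Y(k + 1) - λ P_Y(k)) / a`. For exponential `X`,
`P_Y(0) = e^{-λ} E[e^{-a X}]`, and the Laplace transform of the exponential law is `α / (α + a)`.
-/

open MeasureTheory ProbabilityTheory

noncomputable section

open Real
open scoped Nat

-- The Poisson mass function, with a real mean so that it is the integrand of the hypothesis.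
def poissonWeight (m : ℝ) (k : ℕ) : ℝ := m ^ k * exp (-m) / k !

lemma measurable_poissonWeight (k : ℕ) : Measurable fun m => poissonWeight m k := by
  unfold poissonWeight; fun_prop

lemma poissonWeight_nonneg {m : ℝ} (hm : 0 ≤ m) (k : ℕ) : 0 ≤ poissonWeight m k := by
  unfold poissonWeight; positivity

lemma poissonWeight_le_one {m : ℝ} (hm : 0 ≤ m) (k : ℕ) : poissonWeight m k ≤ 1 := by
  have hterm : m ^ k / k ! ≤ exp m :=
    (Finset.single_le_sum (f := fun i => m ^ i / i !) (fun i _ => by positivity)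
      (Finset.self_mem_range_succ k)).trans (sum_le_exp_of_nonneg hm _)
  calc poissonWeight m k = m ^ k / k ! * exp (-m) := by unfold poissonWeight; ring
    _ ≤ exp m * exp (-m) := by gcongr
    _ = 1 := by rw [← exp_add, add_neg_cancel, exp_zero]

lemma poissonWeight_zero (m : ℝ) : poissonWeight m 0 = exp (-m) := by
  simp [poissonWeight]

lemma mul_poissonWeight (m : ℝ) (k : ℕ) :
    m * poissonWeight m k = (k + 1) * poissonWeight m (k + 1) := by
  unfold poissonWeight
  rw [Nat.factorial_succ, Nat.cast_mul, pow_succ]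
  field_simp
  push_cast
  ring

lemma poissonWeight_affine_mul {a : ℝ} (ha : a ≠ 0) (lam x : ℝ) (k : ℕ) :
    poissonWeight (a * x + lam) k * x
      = 1 / a * ((k + 1) * poissonWeight (a * x + lam) (k + 1))
        - lam / a * poissonWeight (a * x + lam) k := by
  rw [← mul_poissonWeight]
  field_simp
  ring

lemma integral_exp_mul_expMeasure {α t : ℝ} (hα : 0 < α) (ht : t < α) :
    ∫ x, exp (t * x) ∂expMeasure α = α / (α - t) := by
  have hpdf : ∀ x, (ENNReal.ofReal (exponentialPDFReal α x)).toReal • exp (t * x)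
      = Set.indicator (Set.Ici 0) (fun x => α * exp ((t - α) * x)) x := by
    intro x
    rw [ENNReal.toReal_ofReal (exponentialPDFReal_nonneg hα x), smul_eq_mul, exponentialPDFReal,
      gammaPDFReal, Set.indicator_apply]
    by_cases hx : 0 ≤ x
    · rw [if_pos hx, if_pos (Set.mem_Ici.2 hx)]
      simp only [rpow_one, Gamma_one, div_one, sub_self, rpow_zero, mul_one]
      rw [mul_assoc, ← exp_add]
      ring_nf
    · rw [if_neg hx, if_neg (mt Set.mem_Ici.1 hx), zero_mul]
  show ∫ x, exp (t * x) ∂volume.withDensity (fun x => ENNReal.ofReal (exponentialPDFReal α x)) = _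
  rw [integral_withDensity_eq_integral_toReal_smul
      (measurable_exponentialPDFReal α).ennreal_ofReal (by simp)]
  simp_rw [hpdf]
  rw [integral_indicator measurableSet_Ici, integral_Ici_eq_integral_Ioi, integral_const_mul,
    integral_exp_mul_Ioi (by linarith) 0, mul_zero, exp_zero, neg_div, ← div_neg, neg_sub,
    mul_one_div]

section

variable {Ω α : Type*} [MeasurableSpace Ω] [MeasurableSpace α] {μ : Measure Ω} {X : Ω → α}
  {f : α → ℝ} {A : Set Ω}

lemma map_restrict_eq_withDensity [IsFiniteMeasure μ] (hX : Measurable X) (hf : Measurable f)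
    (hf0 : ∀ ω, 0 ≤ f (X ω)) (hfi : Integrable (fun ω => f (X ω)) μ)
    (hA : ∀ B, MeasurableSet B → (μ (A ∩ X ⁻¹' B)).toReal = ∫ ω in X ⁻¹' B, f (X ω) ∂μ) :
    (μ.restrict A).map X = (μ.map X).withDensity fun x => ENNReal.ofReal (f x) := by
  ext B hB
  rw [Measure.map_apply hX hB, Measure.restrict_apply (hX hB), withDensity_apply _ hB,
    setLIntegral_map hB hf.ennreal_ofReal hX, Set.inter_comm,
    ← ofReal_integral_eq_lintegral_ofReal hfi.restrict (.of_forall hf0), ← hA B hB,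
    ENNReal.ofReal_toReal (measure_ne_top _ _)]

lemma setIntegral_comp_eq_integral_smul {E : Type*} [NormedAddCommGroup E] [NormedSpace ℝ E]
    (hX : Measurable X) (hf : Measurable f) (hf0 : ∀ ω, 0 ≤ f (X ω))
    (hmap : (μ.restrict A).map X = (μ.map X).withDensity fun x => ENNReal.ofReal (f x))
    {g : α → E} (hg : StronglyMeasurable g) :
    ∫ ω in A, g (X ω) ∂μ = ∫ ω, f (X ω) • g (X ω) ∂μ := by
  have hf0' : ∀ᵐ x ∂μ.map X, 0 ≤ f x :=
    (ae_map_iff hX.aemeasurable (measurableSet_le measurable_const hf)).2 (.of_forall hf0)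
  rw [← integral_map hX.aemeasurable hg.aestronglyMeasurable, hmap,
    integral_withDensity_eq_integral_toReal_smul hf.ennreal_ofReal (by simp),
    ← integral_map (f := fun x => f x • g x) hX.aemeasurable
      (hf.stronglyMeasurable.smul hg).aestronglyMeasurable]
  refine integral_congr_ae ?_
  filter_upwards [hf0'] with x hx
  rw [ENNReal.toReal_ofReal hx]

lemma integrable_poissonWeight_comp [IsFiniteMeasure μ] {Z : Ω → ℝ} (hZ : Measurable Z)
    (hZ0 : ∀ ω, 0 ≤ Z ω) (k : ℕ) : Integrable (fun ω => poissonWeight (Z ω) k) μ :=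
  (integrable_const 1).mono' ((measurable_poissonWeight k).comp hZ).aestronglyMeasurable
    (.of_forall fun ω => by
      rw [norm_of_nonneg (poissonWeight_nonneg (hZ0 ω) k)]
      exact poissonWeight_le_one (hZ0 ω) k)

lemma integral_poissonWeight_affine_mul [IsFiniteMeasure μ] {a : ℝ} (ha : a ≠ 0) (lam : ℝ)
    {Z : Ω → ℝ} (hZ : Measurable Z) (hZ0 : ∀ ω, 0 ≤ a * Z ω + lam) (k : ℕ) :
    ∫ ω, poissonWeight (a * Z ω + lam) k * Z ω ∂μ
      = 1 / a * ((k + 1) * ∫ ω, poissonWeight (a * Z ω + lam) (k + 1) ∂μ)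
        - lam / a * ∫ ω, poissonWeight (a * Z ω + lam) k ∂μ := by
  have hint : ∀ k, Integrable (fun ω => poissonWeight (a * Z ω + lam) k) μ :=
    integrable_poissonWeight_comp (by fun_prop) hZ0
  simp_rw [poissonWeight_affine_mul ha]
  rw [integral_sub (((hint (k + 1)).const_mul _).const_mul _) ((hint k).const_mul _),
    integral_const_mul, integral_const_mul, integral_const_mul]

end

theorem stmt16_general {Ω : Type} [MeasurableSpace Ω] (μ : Measure Ω) [IsProbabilityMeasure μ]
    (a lam : ℝ) (ha : 0 < a) (hlam : 0 ≤ lam)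
    (X : Ω → ℝ) (hX : Measurable X) (hXpos : ∀ ω, 0 ≤ X ω)
    (Y : Ω → ℕ)
    (hPo : ∀ (k : ℕ) (B : Set ℝ), MeasurableSet B →
      (μ {ω | Y ω = k ∧ X ω ∈ B}).toReal
        = ∫ ω in {ω | X ω ∈ B},
            (a * X ω + lam) ^ k * Real.exp (-(a * X ω + lam)) / (Nat.factorial k) ∂μ) :
    (∀ k : ℕ, 0 < (μ {ω | Y ω = k}).toReal →
      condExpEvent μ {ω | Y ω = k} X
        = (1 / a) * ((k + 1 : ℝ) * (μ {ω | Y ω = k + 1}).toReal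
            / (μ {ω | Y ω = k}).toReal) - lam / a)
    ∧ (∀ α : ℝ, 0 < α → Measure.map X μ = expMeasure α →
        (μ {ω | Y ω = 0}).toReal = α * Real.exp (-lam) / (α + a)) := by
  have hmean : Measurable fun x => a * x + lam := by fun_prop
  have hmean0 : ∀ ω, 0 ≤ a * X ω + lam := fun ω => by have := hXpos ω; positivity
  have hprob : ∀ k, (μ {ω | Y ω = k}).toReal = ∫ ω, poissonWeight (a * X ω + lam) k ∂μ := by
    intro k
    simpa only [Set.mem_univ, and_true, Set.ofPred_true, Measure.restrict_univ, poissonWeight]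
      using hPo k Set.univ .univ
  constructor
  · intro k hk
    have hmeas : Measurable fun x => poissonWeight (a * x + lam) k :=
      (measurable_poissonWeight k).comp hmean
    have hweight0 : ∀ ω, 0 ≤ poissonWeight (a * X ω + lam) k :=
      fun ω => poissonWeight_nonneg (hmean0 ω) k
    have hmix : ∫ ω in {ω | Y ω = k}, X ω ∂μ = ∫ ω, poissonWeight (a * X ω + lam) k * X ω ∂μ :=
      setIntegral_comp_eq_integral_smul hX hmeas hweight0
        (map_restrict_eq_withDensity hX hmeas hweight0
          (integrable_poissonWeight_comp (hmean.comp hX) hmean0 k) (hPo k))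
        stronglyMeasurable_id
    rw [condExpEvent, hmix, integral_poissonWeight_affine_mul ha.ne' lam hX hmean0, ← hprob,
      ← hprob]
    field_simp
  · intro α hα hmap
    calc (μ {ω | Y ω = 0}).toReal = ∫ ω, exp (-(a * X ω + lam)) ∂μ := by
          simp_rw [hprob, poissonWeight_zero]
      _ = (∫ x, exp (-a * x) ∂μ.map X) * exp (-lam) := by
          rw [integral_map hX.aemeasurable (by fun_prop), ← integral_mul_const]
          congr 1 with ω
          rw [← exp_add]
          ring_nf
      _ = α * exp (-lam) / (α + a) := by
          rw [hmap, integral_exp_mul_expMeasure hα (by linarith), sub_neg_eq_add]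
          ring

/-- if `Y | X = x` is Poisson with mean `a x + λ`, then for every `k` with
`P_Y(k) > 0`, `E[X | Y = k] = (1/a)(k+1) P_Y(k+1)/P_Y(k) - λ/a`; moreover if `X` is
exponential with rate `α`, then `P_Y(0) = α e^{-λ}/(α + a)`. -/
theorem stmt16 {Ω : Type} [MeasurableSpace Ω] (μ : Measure Ω) [IsProbabilityMeasure μ]
    (a lam : ℝ) (ha : 0 < a) (hlam : 0 ≤ lam)
    (X : Ω → ℝ) (hX : Measurable X) (hXpos : ∀ ω, 0 ≤ X ω)
    (Y : Ω → ℕ) (hY : Measurable Y)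
    (hPo : ∀ (k : ℕ) (B : Set ℝ), MeasurableSet B →
      (μ {ω | Y ω = k ∧ X ω ∈ B}).toReal
        = ∫ ω in {ω | X ω ∈ B},
            (a * X ω + lam) ^ k * Real.exp (-(a * X ω + lam)) / (Nat.factorial k) ∂μ) :
    (∀ k : ℕ, 0 < (μ {ω | Y ω = k}).toReal →
      condExpEvent μ {ω | Y ω = k} X
        = (1 / a) * ((k + 1 : ℝ) * (μ {ω | Y ω = k + 1}).toReal
            / (μ {ω | Y ω = k}).toReal) - lam / a)
    ∧ (∀ α : ℝ, 0 < α → Measure.map X μ = expMeasure α →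
        (μ {ω | Y ω = 0}).toReal = α * Real.exp (-lam) / (α + a)) :=
  stmt16_general μ a lam ha hlam X hX hXpos Y hPo
end
end
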